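/- Let n ≥ 2, f ≥ 1, D ⊆ {1,…,n−1}, and let λ ∈ ℤ^n satisfy (H_f). Suppose w ∈ S_n is D-admissible with w·λ'_D dominant and supp(fθ − w·λ'_D) ⊆ w(D). Then w is the unique D-admissible permutation w' ∈ S_n such that w'·λ'_D is dominant. (Paper: Lemma 'single' in §2.2, for G = GL_n: if P(C_P) = {}^w P then W(C_P) is a singleton.) -/

import Mathlib

/-!
Setup (§2.2 of the paper, for `G = GL_n`): the symmetric group `S_n` acts on `ℚ^n` by
permuting coordinates, `(w • v) k = v (w⁻¹ k)`.  Coordinates are indexed by `Fin n`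
(`0`-based), so the simple roots are `α i = e i − e (i+1)` for `i ∈ {0, …, n−2}`
(the paper's `α_{i+1}`), subsets of simple roots are subsets of
`{0, …, n−2} = Finset.range (n−1)`, and `θ = (n−1, n−2, …, 1, 0)`.
-/

namespace BHHMS

/-- The standard basis vector `e i` of `ℚ^n`. -/
def stde (n i : ℕ) : Fin n → ℚ := fun k => if (k : ℕ) = i then 1 else 0

/-- The simple root `α i = e i − e (i+1)`, for `i ∈ {0, …, n−2}`. -/
def simpleRoot (n i : ℕ) : Fin n → ℚ := stde n i - stde n (i + 1)

/-- The action of `S_n` on `ℚ^n` permuting the coordinates: `(w • v) k = v (w⁻¹ k)`. -/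
def permAct (n : ℕ) (w : Equiv.Perm (Fin n)) (v : Fin n → ℚ) : Fin n → ℚ :=
  fun k => v (w⁻¹ k)

/-- `v ≤ v'` iff `v' − v` is a `ℚ≥0`-linear combination of the simple roots. -/
def rootLE (n : ℕ) (v v' : Fin n → ℚ) : Prop :=
  ∃ c : ℕ → ℚ, (∀ i, 0 ≤ c i) ∧ v' - v = ∑ i ∈ Finset.range (n - 1), c i • simpleRoot n i

/-- `v` is dominant iff `v 0 ≥ v 1 ≥ … ≥ v (n−1)`. -/
def Dominant (n : ℕ) (v : Fin n → ℚ) : Prop := ∀ i j : Fin n, i ≤ j → v j ≤ v i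

/-- The adjacent transposition `s i = (i, i+1)` (junk value `1` if `i + 1 ≥ n`). -/
def adjSwap (n i : ℕ) : Equiv.Perm (Fin n) :=
  if h : i + 1 < n then Equiv.swap ⟨i, Nat.lt_of_succ_lt h⟩ ⟨i + 1, h⟩ else 1

/-- The subgroup `W_D ⊆ S_n` generated by the `s i` for `i ∈ D`. -/
def WD (n : ℕ) (D : Finset ℕ) : Subgroup (Equiv.Perm (Fin n)) :=
  Subgroup.closure (adjSwap n '' ↑D)

/-- `Σ_{w ∈ W_D} w·v`. -/
noncomputable def WDsum (n : ℕ) (D : Finset ℕ) (v : Fin n → ℚ) : Fin n → ℚ :=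
  ∑ᶠ w ∈ WD n D, permAct n w v

/-- The `W_D`-average `λ'_D = |W_D|⁻¹ Σ_{w ∈ W_D} w·λ`. -/
noncomputable def avg (n : ℕ) (D : Finset ℕ) (v : Fin n → ℚ) : Fin n → ℚ :=
  ((Nat.card ↥(WD n D) : ℚ))⁻¹ • WDsum n D v

/-- For `v` of coordinate sum `0`, writing `v = Σ_i c_i • α_i` one has
`c_i = v 0 + ⋯ + v i`; then `supp v = {i : c_i ≠ 0}`. -/
def suppOf (n : ℕ) (v : Fin n → ℚ) : Finset ℕ :=
  (Finset.range (n - 1)).filter fun i => (∑ k : Fin n, if (k : ℕ) ≤ i then v k else 0) ≠ 0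

/-- `w` is `D`-admissible iff `w (i+1) = w i + 1` for every `i ∈ D`. -/
def IsAdmissible (n : ℕ) (D : Finset ℕ) (w : Equiv.Perm (Fin n)) : Prop :=
  ∀ i ∈ D, ∀ h : i + 1 < n,
    ((w ⟨i + 1, h⟩ : Fin n) : ℕ) = ((w ⟨i, Nat.lt_of_succ_lt h⟩ : Fin n) : ℕ) + 1

/-- The image `w(D) = {w i : i ∈ D}` as a subset of `ℕ`. -/
def permImage (n : ℕ) (w : Equiv.Perm (Fin n)) (D : Finset ℕ) : Finset ℕ :=
  D.image fun i => if h : i < n then ((w ⟨i, h⟩ : Fin n) : ℕ) else i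

/-- `θ = (n−1, n−2, …, 1, 0)`. -/
def theta (n : ℕ) : Fin n → ℚ := fun k => (n : ℚ) - 1 - ((k : ℕ) : ℚ)

/-- A vector of `ℤ^n` seen in `ℚ^n`. -/
def ratVec (n : ℕ) (lam : Fin n → ℤ) : Fin n → ℚ := fun k => ((lam k : ℤ) : ℚ)

/-- `λ ∈ ℤ^n` satisfies `(H_f)` iff `σ·λ ≤ fθ` for every `σ ∈ S_n`. -/
def SatisfiesHf (n f : ℕ) (lam : Fin n → ℤ) : Prop :=
  ∀ σ : Equiv.Perm (Fin n), rootLE n (permAct n σ (ratVec n lam)) ((f : ℚ) • theta n)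

/-!
Both `w·λ'_D` and `w'·λ'_D` are dominant rearrangements of `λ'_D`, hence the same vector `ν`,
and `π = w' w⁻¹` preserves `ν`. Averaging `(H_f)` over `W_D` bounds the partial sums of `ν` by
those of `fθ`. As `fθ` strictly decreases, `ν_m = ν_{m+1}` forces the bound at `m` to be strict,
so `m ∈ supp (fθ − ν) ⊆ w(D)`: then `m, m+1` are `w d, w (d+1)` with `d ∈ D`, and admissibility
of `w'` gives `π (m+1) = π m + 1`. A permutation preserving an antitone `ν` and translating each
run of equal entries of `ν` is the identity (if `π j < j`, then `ν (j-1) = ν j`, and induct).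
-/

end BHHMS

namespace Equiv.Perm

theorem eq_one_of_forall_le {n : ℕ} {π : Perm (Fin n)} (h : ∀ j, j ≤ π j) : π = 1 := by
  have hsum : ∑ j : Fin n, (j : ℕ) = ∑ j, (π j : ℕ) := (Equiv.sum_comp π (fun j => (j : ℕ))).symm
  have := (Finset.sum_eq_sum_iff_of_le fun j _ => Fin.le_def.mp (h j)).mp hsum
  ext j
  exact (this j (Finset.mem_univ j)).symm

theorem eq_one_of_antitone_of_apply_succ {α : Type*} [PartialOrder α] {n : ℕ}
    {ν : Fin n → α} (hν : Antitone ν) {π : Perm (Fin n)} (hπ : ∀ j, ν (π j) = ν j)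
    (hsucc : ∀ i : Fin n, ∀ h : (i : ℕ) + 1 < n,
      ν i = ν ⟨i + 1, h⟩ → (π ⟨i + 1, h⟩ : ℕ) = π i + 1) :
    π = 1 := by
  have key (j : ℕ) : ∀ hj : j < n, j ≤ (π ⟨j, hj⟩ : ℕ) := by
    induction j using Nat.strong_induction_on with
    | _ j IH =>
      intro hj
      by_contra! hlt
      obtain ⟨i, rfl⟩ : ∃ i, j = i + 1 := Nat.exists_eq_succ_of_ne_zero (by omega)
      have hi : i < n := by omega
      have hrun : ν ⟨i, hi⟩ = ν ⟨i + 1, hj⟩ := le_antisymm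
        (hπ ⟨i + 1, hj⟩ ▸ hν (Fin.le_def.mpr (by simp only; omega)))
        (hν (Fin.le_def.mpr (Nat.le_succ i)))
      have hstep : (π ⟨i + 1, hj⟩ : ℕ) = π ⟨i, hi⟩ + 1 := hsucc ⟨i, hi⟩ hj hrun
      have hIH := IH i (by omega) hi
      omega
  exact eq_one_of_forall_le fun j => Fin.le_def.mpr (key j j.isLt)

end Equiv.Perm

namespace BHHMS

-- `partialSum n (i + 1)` reads off the coefficient `c_i` of `α_i`, as in `suppOf`.
def partialSum (n m : ℕ) : (Fin n → ℚ) →ₗ[ℚ] ℚ where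
  toFun v := ∑ k : Fin n, if (k : ℕ) < m then v k else 0
  map_add' v v' := by simp only [Pi.add_apply, ← Finset.sum_add_distrib, ite_add_ite, add_zero]
  map_smul' c v := by simp [Finset.mul_sum]

theorem partialSum_apply (n m : ℕ) (v : Fin n → ℚ) :
    partialSum n m v = ∑ k : Fin n, if (k : ℕ) < m then v k else 0 := rfl

theorem partialSum_succ {n m : ℕ} (h : m < n) (v : Fin n → ℚ) :
    partialSum n (m + 1) v = partialSum n m v + v ⟨m, h⟩ := by
  have hterm (k : Fin n) : (if (k : ℕ) < m + 1 then v k else 0) =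
      (if (k : ℕ) < m then v k else 0) + if k = ⟨m, h⟩ then v k else 0 := by
    rcases lt_trichotomy (k : ℕ) m with hk | hk | hk
    · simp [hk, Nat.lt_succ_of_lt hk, Fin.ext_iff, hk.ne]
    · simp [hk, Fin.ext_iff]
    · simp [Fin.ext_iff, hk.ne', Nat.not_le.mpr hk, Nat.not_lt.mpr hk.le]
  simp only [partialSum_apply, hterm, Finset.sum_add_distrib, Finset.sum_ite_eq',
    Finset.mem_univ, if_true]

theorem partialSum_stde {n i : ℕ} (hi : i < n) (m : ℕ) :
    partialSum n m (stde n i) = if i < m then 1 else 0 := by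
  have hterm (k : Fin n) : (if (k : ℕ) < m then stde n i k else 0) =
      if k = ⟨i, hi⟩ then (if i < m then 1 else 0) else 0 := by
    by_cases hk : (k : ℕ) = i <;> simp [stde, hk, Fin.ext_iff]
  simp only [partialSum_apply, hterm, Finset.sum_ite_eq', Finset.mem_univ, if_true]

theorem partialSum_simpleRoot {n i : ℕ} (hi : i + 1 < n) (m : ℕ) :
    partialSum n m (simpleRoot n i) = if m = i + 1 then 1 else 0 := by
  rw [simpleRoot, map_sub, partialSum_stde (by omega), partialSum_stde hi]
  split_ifs <;> (try norm_num) <;> omega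

theorem partialSum_le_of_rootLE {n : ℕ} {v v' : Fin n → ℚ} (h : rootLE n v v') (m : ℕ) :
    partialSum n m v ≤ partialSum n m v' := by
  obtain ⟨c, hc, hsum⟩ := h
  have hdiff : 0 ≤ partialSum n m (v' - v) := by
    rw [hsum, map_sum]
    refine Finset.sum_nonneg fun i hi => ?_
    rw [map_smul, partialSum_simpleRoot (by have := Finset.mem_range.mp hi; omega), smul_eq_mul]
    exact mul_nonneg (hc i) (by split_ifs <;> norm_num)
  rwa [map_sub, sub_nonneg] at hdiff

theorem partialSum_permAct_avg_le {n m : ℕ} (D : Finset ℕ) {v : Fin n → ℚ} {c : ℚ}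
    (h : ∀ σ, partialSum n m (permAct n σ v) ≤ c) (u : Equiv.Perm (Fin n)) :
    partialSum n m (permAct n u (avg n D v)) ≤ c := by
  have hfin : (WD n D : Set (Equiv.Perm (Fin n))).Finite := Set.toFinite _
  set t := hfin.toFinset
  have hcard : (Nat.card (WD n D) : ℚ) = t.card := by
    rw [← SetLike.coe_sort_coe, Nat.card_eq_card_finite_toFinset hfin]
  have ht : (0 : ℚ) < t.card := by rw [← hcard]; exact_mod_cast Nat.card_pos
  have hsum : WDsum n D v = ∑ σ ∈ t, permAct n σ v := finsum_mem_eq_finite_toFinset_sum _ hfin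
  let φ := partialSum n m ∘ₗ LinearMap.funLeft ℚ ℚ ⇑u⁻¹
  change φ (avg n D v) ≤ c
  rw [avg, hsum, map_smul, map_sum, smul_eq_mul, hcard, inv_mul_le_iff₀ ht]
  calc ∑ σ ∈ t, φ (permAct n σ v) = ∑ σ ∈ t, partialSum n m (permAct n (u * σ) v) := rfl
    _ ≤ ∑ σ ∈ t, c := Finset.sum_le_sum fun σ _ => h (u * σ)
    _ = t.card * c := by rw [Finset.sum_const, nsmul_eq_mul]

theorem mem_suppOf_iff {n m : ℕ} {v : Fin n → ℚ} :
    m ∈ suppOf n v ↔ m < n - 1 ∧ partialSum n (m + 1) v ≠ 0 := by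
  simp [suppOf, partialSum_apply]

theorem mem_suppOf_sub_of_eq {n m : ℕ} {g ν : Fin n → ℚ}
    (hle : ∀ k, partialSum n k ν ≤ partialSum n k g) (hm : m + 1 < n)
    (hg : g ⟨m + 1, hm⟩ < g ⟨m, by omega⟩) (hν : ν ⟨m, by omega⟩ = ν ⟨m + 1, hm⟩) :
    m ∈ suppOf n (g - ν) := by
  refine mem_suppOf_iff.mpr ⟨by omega, fun hzero => ?_⟩
  rw [map_sub, sub_eq_zero] at hzero
  have hle_m := hle m
  have hle_m2 := hle (m + 2)
  rw [partialSum_succ hm, partialSum_succ hm, hzero] at hle_m2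
  rw [partialSum_succ (by omega), partialSum_succ (by omega)] at hzero
  linarith

theorem smul_theta_succ_lt {n f m : ℕ} (hf : 1 ≤ f) (hm : m + 1 < n) :
    ((f : ℚ) • theta n) ⟨m + 1, hm⟩ < ((f : ℚ) • theta n) ⟨m, by omega⟩ := by
  have : (1 : ℚ) ≤ f := by exact_mod_cast hf
  simp only [Pi.smul_apply, theta, smul_eq_mul, Nat.cast_add, Nat.cast_one]
  linarith

theorem exists_apply_eq_of_mem_permImage {n : ℕ} {D : Finset ℕ} {w : Equiv.Perm (Fin n)}
    (hD : D ⊆ Finset.range (n - 1)) (hw : IsAdmissible n D w) {i : Fin n}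
    (hi : (i : ℕ) ∈ permImage n w D) :
    ∃ d ∈ D, ∃ hd : d + 1 < n, w ⟨d, by omega⟩ = i ∧ (w ⟨d + 1, hd⟩ : ℕ) = i + 1 := by
  obtain ⟨d, hdD, hdi⟩ := Finset.mem_image.mp hi
  have hd : d + 1 < n := by have := Finset.mem_range.mp (hD hdD); omega
  rw [dif_pos (by omega)] at hdi
  exact ⟨d, hdD, hd, Fin.ext hdi, by rw [hw d hdD hd, hdi]⟩

theorem statement6_general (n f : ℕ) (hf : 1 ≤ f) (D : Finset ℕ)
    (hD : D ⊆ Finset.range (n - 1)) (lam : Fin n → ℤ) (hlam : SatisfiesHf n f lam)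
    (w : Equiv.Perm (Fin n)) (hw : IsAdmissible n D w)
    (hdom : Dominant n (permAct n w (avg n D (ratVec n lam))))
    (hsupp : suppOf n ((f : ℚ) • theta n - permAct n w (avg n D (ratVec n lam)))
      ⊆ permImage n w D) :
    ∀ w' : Equiv.Perm (Fin n), IsAdmissible n D w' →
      Dominant n (permAct n w' (avg n D (ratVec n lam))) → w' = w := by
  intro w' hw' hdom'
  set ν := permAct n w (avg n D (ratVec n lam))
  have hν' : permAct n w' (avg n D (ratVec n lam)) = ν := Tuple.unique_antitone hdom' hdom
  have hle (m : ℕ) : partialSum n m ν ≤ partialSum n m ((f : ℚ) • theta n) :=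
    partialSum_permAct_avg_le D (fun σ => partialSum_le_of_rootLE (hlam σ) m) w
  have hπ (j : Fin n) : ν ((w' * w⁻¹) j) = ν j := by
    rw [← congrFun hν']
    simp only [permAct, ν, Equiv.Perm.mul_apply, Equiv.Perm.coe_inv, Equiv.symm_apply_apply]
  refine mul_inv_eq_one.mp (Equiv.Perm.eq_one_of_antitone_of_apply_succ hdom hπ ?_)
  intro i hi hrun
  obtain ⟨d, hdD, hd, rfl, hwd⟩ := exists_apply_eq_of_mem_permImage hD hw
    (hsupp (mem_suppOf_sub_of_eq hle hi (smul_theta_succ_lt hf hi) hrun))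
  have hwd' : w⁻¹ ⟨w ⟨d, by omega⟩ + 1, hi⟩ = ⟨d + 1, hd⟩ := by
    rw [Equiv.Perm.inv_eq_iff_eq]; exact Fin.ext hwd.symm
  simp only [Equiv.Perm.mul_apply, hwd', Equiv.Perm.coe_inv, Equiv.symm_apply_apply]
  exact hw' d hdD hd

/-- Lemma `single`, §2.2, for `G = GL_n`.  If `w` is `D`-admissible with
`w·λ'_D` dominant and `supp (fθ − w·λ'_D) ⊆ w(D)`, then `w` is the unique `D`-admissible
permutation `w'` with `w'·λ'_D` dominant. -/
theorem statement6 (n f : ℕ) (hn : 2 ≤ n) (hf : 1 ≤ f) (D : Finset ℕ)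
    (hD : D ⊆ Finset.range (n - 1)) (lam : Fin n → ℤ) (hlam : SatisfiesHf n f lam)
    (w : Equiv.Perm (Fin n)) (hw : IsAdmissible n D w)
    (hdom : Dominant n (permAct n w (avg n D (ratVec n lam))))
    (hsupp : suppOf n ((f : ℚ) • theta n - permAct n w (avg n D (ratVec n lam)))
      ⊆ permImage n w D) :
    ∀ w' : Equiv.Perm (Fin n), IsAdmissible n D w' →
      Dominant n (permAct n w' (avg n D (ratVec n lam))) → w' = w :=
  statement6_general n f hf D hD lam hlam w hw hdom hsupp

end BHHMS
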